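/- arXiv:1701.05440 — 3 statements merged into one kernel-verified Lean document; each statement's English description precedes it below -/
import Mathlib

section
/- Let ζ : ℝ^d → ℝ be nonnegative, bounded and supported in the cube Q_K for some K > 0. For R ∈ ℕ define ζ_R(x) := Σ_{k∈ℤ^d} ζ(x − Rk) and ζ̂_R(x) := limsup_{N→∞} N^{−d} Σ_{k∈ℤ^d : Q_1(k)⊂Q_N} ζ_R(x+k). Then there is a constant C depending only on ‖ζ‖_∞, K and d such that sup_{x∈ℝ^d} ζ̂_R(x) ≤ C R^{−d} for all R ∈ ℕ. -/
open MeasureTheory Filter Topology Metric Set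
open scoped RealInnerProductSpace

noncomputable section

abbrev EucSp (d : ℕ) := EuclideanSpace ℝ (Fin d)

/-- The point of `ℝ^d` with integer coordinates `k`. -/
def intVec (d : ℕ) (k : Fin d → ℤ) : EucSp d :=
  (EuclideanSpace.equiv (Fin d) ℝ).symm fun i => (k i : ℝ)

/-- The half-open cube `x + [-R/2, R/2)^d`. -/
def cube (d : ℕ) (R : ℝ) (x : EucSp d) : Set (EucSp d) :=
  {y | ∀ i, x i - R / 2 ≤ y i ∧ y i < x i + R / 2}

/-- The unit cube `Q = [-1/2,1/2)^d`. -/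
def unitCube (d : ℕ) : Set (EucSp d) := cube d 1 0

/-- `u` is `Rℤ^d`-periodic. -/
def IsPeriodicR {d : ℕ} (R : ℝ) (u : EucSp d → ℝ) : Prop :=
  ∀ (x : EucSp d) (k : Fin d → ℤ), u (x + R • intVec d k) = u x

/-- Viscosity subsolution of `F (x, u x, Du x) = 0`, i.e. `F (x, u x, Du x) ≤ 0`
tested on `C¹` test functions touching `u` from above. -/
def IsViscositySubsolution {d : ℕ} (F : EucSp d → ℝ → EucSp d → ℝ) (u : EucSp d → ℝ) : Prop :=
  ∀ (φ : EucSp d → ℝ) (x₀ : EucSp d), ContDiff ℝ 1 φ →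
    IsLocalMax (fun x => u x - φ x) x₀ → F x₀ (u x₀) (gradient φ x₀) ≤ 0

/-- Viscosity supersolution of `F (x, u x, Du x) = 0`. -/
def IsViscositySupersolution {d : ℕ} (F : EucSp d → ℝ → EucSp d → ℝ) (u : EucSp d → ℝ) : Prop :=
  ∀ (φ : EucSp d → ℝ) (x₀ : EucSp d), ContDiff ℝ 1 φ →
    IsLocalMin (fun x => u x - φ x) x₀ → 0 ≤ F x₀ (u x₀) (gradient φ x₀)

/-- Continuous viscosity solution of `F (x, u x, Du x) = 0`. -/
def IsViscositySolution {d : ℕ} (F : EucSp d → ℝ → EucSp d → ℝ) (u : EucSp d → ℝ) : Prop :=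
  Continuous u ∧ IsViscositySubsolution F u ∧ IsViscositySupersolution F u

/-- The standing assumptions on the Hamiltonian: `C²` regularity, `ℤ^d`-periodicity in the
space variable, strict convexity (`D²_pp H > 0`) and uniform superlinearity in the momentum. -/
structure IsHamiltonian (d : ℕ) (H : EucSp d → EucSp d → ℝ) : Prop where
  smooth : ContDiff ℝ 2 fun q : EucSp d × EucSp d => H q.1 q.2
  periodic : ∀ (p x : EucSp d) (k : Fin d → ℤ), H p (x + intVec d k) = H p x
  strictConvex : ∀ (x p v : EucSp d), v ≠ 0 →
    0 < fderiv ℝ (fun p' => fderiv ℝ (fun q => H q x) p' v) p v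
  superlinear : ∀ M : ℝ, ∃ r : ℝ, ∀ (p x : EucSp d), r ≤ ‖p‖ → M * ‖p‖ ≤ H p x

/-- `c` is the ergodic constant of the Hamiltonian `G`: the cell problem `G(Dχ, x) = c`
has a continuous `Rℤ^d`-periodic viscosity solution. -/
def IsErgodicConstant (d : ℕ) (R : ℝ) (G : EucSp d → EucSp d → ℝ) (c : ℝ) : Prop :=
  ∃ χ : EucSp d → ℝ, IsPeriodicR R χ ∧ IsViscositySolution (fun x _ p => G p x - c) χ

/-- `ζ_R(x) = ∑_{k ∈ ℤ^d} ζ(x - R k)`. -/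
def periodize (d : ℕ) (R : ℝ) (ζ : EucSp d → ℝ) (x : EucSp d) : ℝ :=
  ∑' k : Fin d → ℤ, ζ (x - R • intVec d k)

/-- The Lagrangian associated with `H`. -/
def Lagrangian (d : ℕ) (H : EucSp d → EucSp d → ℝ) (α x : EucSp d) : ℝ :=
  ⨆ p : EucSp d, (-⟪p, α⟫ - H p x)

/-- Admissible measures in the weak KAM characterization of the ergodic constant:
Radon (locally finite) measures on `ℝ^d × ℝ^d` that are `ℤ^d`-periodic in `x`,
have mass one on `ℝ^d × Q`, and are closed. -/
structure IsAdmissibleMeasure (d : ℕ) (μ : Measure (EucSp d × EucSp d)) : Prop where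
  locallyFinite : IsLocallyFiniteMeasure μ
  periodic : ∀ k : Fin d → ℤ,
    Measure.map (fun z : EucSp d × EucSp d => (z.1, z.2 + intVec d k)) μ = μ
  mass : μ (Set.univ ×ˢ unitCube d) = 1
  closed : ∀ φ : EucSp d → ℝ, ContDiff ℝ (⊤ : ℕ∞) φ → IsPeriodicR 1 φ →
    ∫ z in Set.univ ×ˢ unitCube d, ⟪gradient φ z.2, z.1⟫ ∂μ = 0

/-- A minimizing Mather measure for `H`. -/
def IsMatherMeasure (d : ℕ) (H : EucSp d → EucSp d → ℝ)
    (μ : Measure (EucSp d × EucSp d)) : Prop :=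
  IsAdmissibleMeasure d μ ∧
    ∀ ν, IsAdmissibleMeasure d ν →
      ∫ z in Set.univ ×ˢ unitCube d, Lagrangian d H z.1 z.2 ∂μ ≤
        ∫ z in Set.univ ×ˢ unitCube d, Lagrangian d H z.1 z.2 ∂ν

/-- The rotation number `e = ∫_Q -D_pH(Dχ(x), x) dσ̃(x)`. -/
def rotationNumber (d : ℕ) (H : EucSp d → EucSp d → ℝ) (χ : EucSp d → ℝ)
    (σ : Measure (EucSp d)) : EucSp d :=
  ∫ x in unitCube d, -gradient (fun p => H p x) (gradient χ x) ∂σ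

/-- Assumption (A): the minimizing Mather measure `μ` of `H` is unique, its projection
`σ̃ = (Prod.snd)_* μ` has full support in `ℝ^d`, and the rotation number is nonzero. -/
structure AssumptionA (d : ℕ) (H : EucSp d → EucSp d → ℝ) (χ : EucSp d → ℝ)
    (μ : Measure (EucSp d × EucSp d)) : Prop where
  mather : IsMatherMeasure d H μ
  unique : ∀ ν, IsMatherMeasure d H ν → ν = μ
  fullSupport : ∀ (x : EucSp d) (r : ℝ), 0 < r → 0 < μ.map Prod.snd (Metric.ball x r)
  rotNonzero : rotationNumber d H χ (μ.map Prod.snd) ≠ 0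

/-- The flow of optimal trajectories `γ̄^x`, solving
`d/dt γ̄^x(t) = -D_pH(Dχ(γ̄^x(t)), γ̄^x(t))`, `γ̄^x(0) = x`. -/
def IsCharFlow (d : ℕ) (H : EucSp d → EucSp d → ℝ) (χ : EucSp d → ℝ)
    (γ : EucSp d → ℝ → EucSp d) : Prop :=
  (∀ x, γ x 0 = x) ∧
    ∀ (x : EucSp d) (t : ℝ),
      HasDerivAt (γ x) (-gradient (fun p => H p (γ x t)) (gradient χ (γ x t))) t

/-- An ergodic measure-preserving action of `ℤ^d` on a probability space. -/
structure IsErgodicAction {Ω : Type*} [MeasurableSpace Ω] (P : Measure Ω) (d : ℕ)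
    (τ : (Fin d → ℤ) → Ω → Ω) : Prop where
  measPres : ∀ k, MeasurePreserving (τ k) P P
  zero : ∀ ω, τ 0 ω = ω
  add : ∀ k l ω, τ (k + l) ω = τ k (τ l ω)
  ergodic : ∀ A : Set Ω, MeasurableSet A → (∀ k, τ k ⁻¹' A = A) → P A = 0 ∨ P A = 1

/-- A family of i.i.d. Bernoulli random variables of parameter `η`. -/
structure IsBernoulliFamily {Ω : Type*} [MeasurableSpace Ω] (P : Measure Ω) {ι : Type*}
    (η : ℝ) (X : ι → Ω → ℝ) : Prop where
  meas : ∀ k, Measurable (X k)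
  values : ∀ k ω, X k ω = 0 ∨ X k ω = 1
  bern : ∀ k, P {ω | X k ω = 1} = ENNReal.ofReal η
  indep : ProbabilityTheory.iIndepFun X P

/-- `f̂(x) = limsup_{N → ∞} N^{-d} ∑_{k ∈ ℤ^d, Q₁(k) ⊆ Q_N} f(x + k)`. -/
def avgUpper (d : ℕ) (f : EucSp d → ℝ) (x : EucSp d) : ℝ :=
  Filter.limsup (fun N : ℕ =>
    ((N : ℝ) ^ d)⁻¹ * ∑' k : Fin d → ℤ,
      Set.indicator {k : Fin d → ℤ | cube d 1 (intVec d k) ⊆ cube d N 0}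
        (fun k => f (x + intVec d k)) k) Filter.atTop

end

namespace AvgBumpAux
open Finset Fintype

variable {d : ℕ}

lemma intVec_apply (k : Fin d → ℤ) (i : Fin d) : intVec d k i = (k i : ℝ) := rfl

lemma eadd_apply (x y : EucSp d) (i : Fin d) : (x + y) i = x i + y i := rfl
lemma esub_apply (x y : EucSp d) (i : Fin d) : (x - y) i = x i - y i := rfl
lemma esmul_apply (a : ℝ) (x : EucSp d) (i : Fin d) : (a • x) i = a * x i := rfl
lemma ezero_apply (i : Fin d) : (0 : EucSp d) i = 0 := rfl

lemma intVec_add (a b : Fin d → ℤ) : intVec d (a + b) = intVec d a + intVec d b := by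
  ext i
  show ((a i + b i : ℤ) : ℝ) = (a i : ℝ) + (b i : ℝ)
  push_cast; ring

lemma intVec_sub (a b : Fin d → ℤ) : intVec d (a - b) = intVec d a - intVec d b := by
  ext i
  show ((a i - b i : ℤ) : ℝ) = (a i : ℝ) - (b i : ℝ)
  push_cast; ring

lemma abs_coord_le_norm (x : EucSp d) (i : Fin d) : |x i| ≤ ‖x‖ := by
  rw [EuclideanSpace.norm_eq, ← Real.sqrt_sq_eq_abs]
  apply Real.sqrt_le_sqrt
  have := Finset.single_le_sum (f := fun j => ‖x j‖ ^ 2) (fun j _ => sq_nonneg _)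
    (Finset.mem_univ i)
  simpa [Real.norm_eq_abs, sq_abs] using this

lemma zeta_zero {K : ℝ} {ζ : EucSp d → ℝ} (hζsupp : Function.support ζ ⊆ cube d K 0)
    {y : EucSp d} (i : Fin d) (hy : K / 2 < |y i|) : ζ y = 0 := by
  by_contra h
  have hmem := hζsupp h i
  rw [ezero_apply] at hmem
  have : |y i| ≤ K / 2 := abs_le.2 ⟨by linarith [hmem.1], le_of_lt (by linarith [hmem.2])⟩
  linarith

/-- `ζ_R(y)` is a finite sum once we take a large enough box. -/
lemma periodize_eq_sum {K : ℝ} {ζ : EucSp d → ℝ} (hζsupp : Function.support ζ ⊆ cube d K 0)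
    (R : ℕ) (hR : 1 ≤ R) (y : EucSp d) (L : ℕ) (hL : ∀ i, |y i| + K / 2 ≤ L) :
    periodize d R ζ y =
      ∑ j ∈ Fintype.piFinset (fun _ : Fin d => Finset.Icc (-(L : ℤ)) L),
        ζ (y - (R : ℝ) • intVec d j) := by
  apply tsum_eq_sum
  intro j hj
  rw [Fintype.mem_piFinset] at hj
  push_neg at hj
  obtain ⟨i, hi⟩ := hj
  rw [Finset.mem_Icc] at hi
  push_neg at hi
  have habs : (L : ℤ) + 1 ≤ |j i| := by
    rcases le_or_gt (-(L : ℤ)) (j i) with h | h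
    · have h2 := hi h
      rw [abs_of_nonneg (by omega)]; omega
    · rw [abs_of_neg (by omega)]; omega
  have habsR : ((L : ℝ) + 1) ≤ |(R : ℝ) * (j i : ℝ)| := by
    rw [abs_mul]
    have h1 : ((L : ℝ) + 1) ≤ |(j i : ℝ)| := by
      have : ((L : ℤ) + 1 : ℝ) ≤ (|j i| : ℝ) := by exact_mod_cast habs
      simpa [Int.cast_abs] using this
    have h2 : (1 : ℝ) ≤ |(R : ℝ)| := by
      rw [abs_of_nonneg (by positivity)]
      exact_mod_cast hR
    calc ((L : ℝ) + 1) = 1 * ((L : ℝ) + 1) := by ring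
    _ ≤ |(R : ℝ)| * |(j i : ℝ)| :=
        mul_le_mul h2 h1 (by positivity) (abs_nonneg _)
  apply zeta_zero hζsupp i
  have hcoord : (y - (R : ℝ) • intVec d j) i = y i - (R : ℝ) * (j i : ℝ) := rfl
  rw [hcoord]
  have := hL i
  have h3 : |(R : ℝ) * (j i : ℝ)| - |y i| ≤ |y i - (R : ℝ) * (j i : ℝ)| := by
    have := abs_sub_abs_le_abs_sub ((R : ℝ) * (j i : ℝ)) (y i)
    calc |(R : ℝ) * (j i : ℝ)| - |y i| ≤ |(R : ℝ) * (j i : ℝ) - y i| := this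
    _ = |y i - (R : ℝ) * (j i : ℝ)| := abs_sub_comm _ _
  linarith

/-- Periodicity of `ζ_R` under shifts by `R`-multiples of integer vectors. -/
lemma periodize_shift (ζ : EucSp d → ℝ) (R : ℕ) (y : EucSp d) (q : Fin d → ℤ) :
    periodize d R ζ (y + (R : ℝ) • intVec d q) = periodize d R ζ y := by
  unfold periodize
  have hrw : ∀ j : Fin d → ℤ,
      ζ (y + (R : ℝ) • intVec d q - (R : ℝ) • intVec d j)
        = (fun m => ζ (y - (R : ℝ) • intVec d m)) ((Equiv.subRight q) j) := by
    intro j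
    simp only [Equiv.subRight_apply]
    congr 1
    rw [intVec_sub, smul_sub]
    abel
  calc ∑' j, ζ (y + (R : ℝ) • intVec d q - (R : ℝ) • intVec d j)
      = ∑' j, (fun m => ζ (y - (R : ℝ) • intVec d m)) ((Equiv.subRight q) j) := by
        exact tsum_congr hrw
    _ = ∑' m, ζ (y - (R : ℝ) • intVec d m) :=
        Equiv.tsum_eq (Equiv.subRight q) (fun m => ζ (y - (R : ℝ) • intVec d m))

/-- Uniqueness of division with remainder. -/
lemma unique_decomp {R : ℕ} (hR : 1 ≤ R) {a b a' b' : ℤ} (ha : 0 ≤ a) (ha2 : a < R)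
    (ha' : 0 ≤ a') (ha'2 : a' < R) (h : a - R * b = a' - R * b') : a = a' ∧ b = b' := by
  have hRpos : (0 : ℤ) < R := by exact_mod_cast hR
  have hb : b = b' := by
    by_contra hne
    rcases lt_or_gt_of_ne hne with hlt | hlt
    · have h1 : b + 1 ≤ b' := hlt
      have : R * (b + 1) ≤ R * b' := by
        exact mul_le_mul_of_nonneg_left h1 hRpos.le
      have : R * b + R ≤ R * b' := by linarith [this]
      omega
    · have h1 : b' + 1 ≤ b := hlt
      have : R * (b' + 1) ≤ R * b := mul_le_mul_of_nonneg_left h1 hRpos.le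
      have : R * b' + R ≤ R * b := by linarith [this]
      omega
  constructor
  · rw [hb] at h; omega
  · exact hb

/-- The sum of `ζ_R(x + r)` over a full set of residues `r ∈ [0,R)^d` is bounded
independently of `R`. -/
lemma sum_res_le {K : ℝ} (hK : 0 < K) {ζ : EucSp d → ℝ} (hζ0 : ∀ x, 0 ≤ ζ x)
    {M' : ℝ} (hζle : ∀ y, ζ y ≤ M') (hM' : 0 ≤ M')
    (hζsupp : Function.support ζ ⊆ cube d K 0)
    (R : ℕ) (hR : 1 ≤ R) (x : EucSp d) :
    ∑ r ∈ Fintype.piFinset (fun _ : Fin d => Finset.Ico (0 : ℤ) (R : ℤ)),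
      periodize d R ζ (x + intVec d r) ≤ M' * (K + 1) ^ d := by
  classical
  set Res := Fintype.piFinset (fun _ : Fin d => Finset.Ico (0 : ℤ) (R : ℤ)) with hRes
  set L : ℕ := ⌈‖x‖ + R + K / 2⌉₊ with hLdef
  set Jbox := Fintype.piFinset (fun _ : Fin d => Finset.Icc (-(L : ℤ)) (L : ℤ)) with hJbox
  have hL : ∀ r ∈ Res, ∀ i, |(x + intVec d r) i| + K / 2 ≤ L := by
    intro r hr i
    rw [hRes, Fintype.mem_piFinset] at hr
    obtain ⟨h1, h2⟩ := Finset.mem_Ico.1 (hr i)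
    have hri : |(r i : ℝ)| ≤ (R : ℝ) := by
      rw [abs_of_nonneg (by exact_mod_cast h1)]
      exact_mod_cast h2.le
    have hxi : |x i| ≤ ‖x‖ := abs_coord_le_norm x i
    have hcoord : (x + intVec d r) i = x i + (r i : ℝ) := rfl
    rw [hcoord]
    have : |x i + (r i : ℝ)| ≤ ‖x‖ + (R : ℝ) :=
      (abs_add_le _ _).trans (add_le_add hxi hri)
    have hceil : ‖x‖ + (R : ℝ) + K / 2 ≤ (L : ℝ) := Nat.le_ceil _
    linarith
  have hstep1 : ∀ r ∈ Res, periodize d R ζ (x + intVec d r)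
      = ∑ j ∈ Jbox, ζ (x + intVec d (fun i => r i - (R : ℤ) * j i)) := by
    intro r hr
    rw [periodize_eq_sum hζsupp R hR _ L (hL r hr)]
    apply Finset.sum_congr rfl
    intro j _
    congr 1
    ext i
    show x i + (r i : ℝ) - (R : ℝ) * (j i : ℝ) = x i + ((r i - (R : ℤ) * j i : ℤ) : ℝ)
    push_cast; ring
  rw [Finset.sum_congr rfl hstep1, ← Finset.sum_product']
  set φ : (Fin d → ℤ) × (Fin d → ℤ) → (Fin d → ℤ) :=
    fun p i => p.1 i - (R : ℤ) * p.2 i with hφ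
  have hinj : ∀ p ∈ Res ×ˢ Jbox, ∀ p' ∈ Res ×ˢ Jbox, φ p = φ p' → p = p' := by
    intro p hp p' hp' h
    rw [Finset.mem_product, hRes, Fintype.mem_piFinset, Fintype.mem_piFinset] at hp hp'
    have hco : ∀ i, p.1 i = p'.1 i ∧ p.2 i = p'.2 i := by
      intro i
      have h1 := Finset.mem_Ico.1 (hp.1 i)
      have h2 := Finset.mem_Ico.1 (hp'.1 i)
      have := congrFun h i
      exact unique_decomp hR h1.1 h1.2 h2.1 h2.2 this
    refine Prod.ext ?_ ?_ <;> funext i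
    · exact (hco i).1
    · exact (hco i).2
  have hsum_img : ∑ p ∈ Res ×ˢ Jbox, ζ (x + intVec d (φ p))
      = ∑ m ∈ (Res ×ˢ Jbox).image φ, ζ (x + intVec d m) :=
    (Finset.sum_image (f := fun m => ζ (x + intVec d m)) hinj).symm
  have hrw2 : ∑ p ∈ Res ×ˢ Jbox, ζ (x + intVec d fun i => p.1 i - (R : ℤ) * p.2 i)
      = ∑ p ∈ Res ×ˢ Jbox, ζ (x + intVec d (φ p)) := rfl
  rw [hrw2, hsum_img]
  set S := (Res ×ˢ Jbox).image φ with hS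
  set G := Fintype.piFinset (fun i => Finset.Icc ⌈-x i - K / 2⌉ ⌊-x i + K / 2⌋) with hG
  have hzero : ∀ m, m ∉ G → ζ (x + intVec d m) = 0 := by
    intro m hm
    by_contra h
    apply hm
    rw [hG, Fintype.mem_piFinset]
    intro i
    have hmem := hζsupp h i
    rw [ezero_apply] at hmem
    have hcoord : (x + intVec d m) i = x i + (m i : ℝ) := rfl
    rw [hcoord] at hmem
    rw [Finset.mem_Icc]
    constructor
    · exact Int.ceil_le.2 (by linarith [hmem.1])
    · exact Int.le_floor.2 (by linarith [hmem.2])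
  have hsub : ∑ m ∈ S, ζ (x + intVec d m) = ∑ m ∈ S ∩ G, ζ (x + intVec d m) :=
    (Finset.sum_subset (Finset.inter_subset_left) (fun m hm hnm => by
      apply hzero
      intro hmG
      exact hnm (Finset.mem_inter.2 ⟨hm, hmG⟩))).symm
  rw [hsub]
  have hcardG : ((G.card : ℝ)) ≤ (K + 1) ^ d := by
    rw [hG, Fintype.card_piFinset]
    push_cast
    calc (∏ i : Fin d, ((Finset.Icc ⌈-x i - K / 2⌉ ⌊-x i + K / 2⌋).card : ℝ))
        ≤ ∏ _i : Fin d, (K + 1) := by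
          apply Finset.prod_le_prod (fun i _ => by positivity)
          intro i _
          rw [Int.card_Icc]
          rcases le_or_gt (⌊-x i + K / 2⌋ + 1 - ⌈-x i - K / 2⌉) 0 with h | h
          · rw [Int.toNat_of_nonpos h]
            push_cast
            linarith
          · have heq : ((⌊-x i + K / 2⌋ + 1 - ⌈-x i - K / 2⌉).toNat : ℝ)
                = ((⌊-x i + K / 2⌋ : ℝ) + 1 - (⌈-x i - K / 2⌉ : ℝ)) := by
              rw [← Int.cast_natCast, Int.toNat_of_nonneg h.le]; push_cast; ring
            rw [heq]
            have h1 := Int.floor_le (-x i + K / 2)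
            have h2 := Int.le_ceil (-x i - K / 2)
            linarith
      _ = (K + 1) ^ d := by
          rw [Finset.prod_const, Finset.card_univ, Fintype.card_fin]
  calc ∑ m ∈ S ∩ G, ζ (x + intVec d m) ≤ ∑ _m ∈ S ∩ G, M' :=
        Finset.sum_le_sum (fun m _ => hζle _)
    _ = ((S ∩ G).card : ℝ) * M' := by rw [Finset.sum_const, nsmul_eq_mul]
    _ ≤ (G.card : ℝ) * M' := by
        apply mul_le_mul_of_nonneg_right _ hM'
        exact_mod_cast Finset.card_le_card (Finset.inter_subset_right)
    _ ≤ (K + 1) ^ d * M' := mul_le_mul_of_nonneg_right hcardG hM'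
    _ = M' * (K + 1) ^ d := by ring

/-- The main estimate for fixed `N ≥ R`. -/
lemma key_bound {K : ℝ} (hK : 0 < K) {ζ : EucSp d → ℝ} (hζ0 : ∀ x, 0 ≤ ζ x)
    {M' : ℝ} (hζle : ∀ y, ζ y ≤ M') (hM' : 0 ≤ M')
    (hζsupp : Function.support ζ ⊆ cube d K 0)
    (R : ℕ) (hR : 1 ≤ R) (x : EucSp d) (N : ℕ) (hN : R ≤ N) :
    ((N : ℝ) ^ d)⁻¹ * ∑' k : Fin d → ℤ,
      Set.indicator {k : Fin d → ℤ | cube d 1 (intVec d k) ⊆ cube d N 0}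
        (fun k => periodize d R ζ (x + intVec d k)) k
      ≤ 5 ^ d * (M' * (K + 1) ^ d) / (R : ℝ) ^ d := by
  classical
  have hNpos : 1 ≤ N := le_trans hR hN
  have hRpos : (0 : ℤ) < (R : ℤ) := by exact_mod_cast hR
  have hRposR : (0 : ℝ) < (R : ℝ) := by exact_mod_cast hR
  have hNposR : (0 : ℝ) < (N : ℝ) := by exact_mod_cast hNpos
  have hper0 : ∀ y, 0 ≤ periodize d R ζ y := fun y => tsum_nonneg fun j => hζ0 _
  set F : Finset (Fin d → ℤ) :=
    Fintype.piFinset (fun _ : Fin d => Finset.Icc (-(N : ℤ)) (N : ℤ)) with hF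
  -- Step 1: tsum is a finite sum over F
  have hstep1 : (∑' k : Fin d → ℤ,
      Set.indicator {k : Fin d → ℤ | cube d 1 (intVec d k) ⊆ cube d N 0}
        (fun k => periodize d R ζ (x + intVec d k)) k)
      = ∑ k ∈ F, Set.indicator {k : Fin d → ℤ | cube d 1 (intVec d k) ⊆ cube d N 0}
        (fun k => periodize d R ζ (x + intVec d k)) k := by
    apply tsum_eq_sum
    intro k hk
    rw [hF, Fintype.mem_piFinset] at hk
    push_neg at hk
    obtain ⟨i, hi⟩ := hk
    rw [Finset.mem_Icc] at hi
    apply Set.indicator_of_notMem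
    intro hsub
    have hc : intVec d k ∈ cube d 1 (intVec d k) := by
      intro i'
      constructor <;> [linarith [le_refl (intVec d k i')]; linarith [le_refl (intVec d k i')]]
    have hmem := hsub hc i
    rw [ezero_apply, intVec_apply] at hmem
    obtain ⟨h1, h2⟩ := hmem
    have hb1 : -(N : ℤ) ≤ k i := by
      have : -(N : ℝ) ≤ (k i : ℝ) := by linarith
      exact_mod_cast this
    have hb2 : k i ≤ (N : ℤ) := by
      have : (k i : ℝ) ≤ (N : ℝ) := by linarith
      exact_mod_cast this
    exact hi ⟨hb1, hb2⟩
  rw [hstep1]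
  -- Step 2: drop indicator
  have hstep2 : ∑ k ∈ F, Set.indicator {k : Fin d → ℤ | cube d 1 (intVec d k) ⊆ cube d N 0}
        (fun k => periodize d R ζ (x + intVec d k)) k
      ≤ ∑ k ∈ F, periodize d R ζ (x + intVec d k) :=
    Finset.sum_le_sum fun k _ =>
      Set.indicator_le_self' (fun k _ => hper0 _) k
  -- Step 3: residue decomposition
  set Q : ℤ := (N : ℤ) / (R : ℤ) with hQdef
  set Res := Fintype.piFinset (fun _ : Fin d => Finset.Ico (0 : ℤ) (R : ℤ)) with hRes
  set QBox := Fintype.piFinset (fun _ : Fin d => Finset.Icc (-(Q + 1)) (Q + 1)) with hQBox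
  set φ : (Fin d → ℤ) × (Fin d → ℤ) → (Fin d → ℤ) :=
    fun p i => p.1 i - (R : ℤ) * p.2 i with hφ
  have hQ0 : 0 ≤ Q := Int.ediv_nonneg (by positivity) hRpos.le
  have hsubset : F ⊆ (Res ×ˢ QBox).image φ := by
    intro k hk
    rw [hF, Fintype.mem_piFinset] at hk
    refine Finset.mem_image.2 ⟨(fun i => k i % (R : ℤ), fun i => -(k i / (R : ℤ))), ?_, ?_⟩
    · rw [Finset.mem_product]
      constructor
      · rw [hRes, Fintype.mem_piFinset]
        intro i
        rw [Finset.mem_Ico]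
        exact ⟨Int.emod_nonneg _ (by omega), Int.emod_lt_of_pos _ hRpos⟩
      · rw [hQBox, Fintype.mem_piFinset]
        intro i
        rw [Finset.mem_Icc]
        have hki := Finset.mem_Icc.1 (hk i)
        have hup : k i / (R : ℤ) ≤ Q := Int.ediv_le_ediv hRpos hki.2
        have hlow : -(Q + 1) ≤ k i / (R : ℤ) := by
          rw [Int.le_ediv_iff_mul_le hRpos]
          have hNQ : (N : ℤ) < (Q + 1) * (R : ℤ) := by
            have := Int.lt_ediv_add_one_mul_self (N : ℤ) hRpos
            simpa [hQdef] using this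
          have : -(Q + 1) * (R : ℤ) ≤ -(N : ℤ) := by nlinarith
          omega
        show -(Q + 1) ≤ -(k i / (R : ℤ)) ∧ -(k i / (R : ℤ)) ≤ Q + 1
        omega
    · funext i
      show k i % (R : ℤ) - (R : ℤ) * -(k i / (R : ℤ)) = k i
      have h1 := Int.mul_ediv_add_emod (k i) (R : ℤ)
      have h2 : (R : ℤ) * -(k i / (R : ℤ)) = -((R : ℤ) * (k i / (R : ℤ))) := by ring
      rw [h2]
      omega
  have hstep3 : ∑ k ∈ F, periodize d R ζ (x + intVec d k)
      ≤ ∑ p ∈ Res ×ˢ QBox, periodize d R ζ (x + intVec d (φ p)) := by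
    calc ∑ k ∈ F, periodize d R ζ (x + intVec d k)
        ≤ ∑ m ∈ (Res ×ˢ QBox).image φ, periodize d R ζ (x + intVec d m) :=
          Finset.sum_le_sum_of_subset_of_nonneg hsubset (fun m _ _ => hper0 _)
      _ = ∑ p ∈ Res ×ˢ QBox, periodize d R ζ (x + intVec d (φ p)) := by
          apply Finset.sum_image (f := fun m => periodize d R ζ (x + intVec d m))
          intro p hp p' hp' h
          rw [Finset.mem_coe, Finset.mem_product, hRes, Fintype.mem_piFinset] at hp hp'
          have hco : ∀ i, p.1 i = p'.1 i ∧ p.2 i = p'.2 i := by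
            intro i
            have h1 := Finset.mem_Ico.1 (hp.1 i)
            have h2 := Finset.mem_Ico.1 (hp'.1 i)
            exact unique_decomp hR h1.1 h1.2 h2.1 h2.2 (congrFun h i)
          refine Prod.ext ?_ ?_ <;> funext i
          · exact (hco i).1
          · exact (hco i).2
  -- Step 4: periodicity collapses the `q`-sum
  have hstep4 : ∑ p ∈ Res ×ˢ QBox, periodize d R ζ (x + intVec d (φ p))
      = (QBox.card : ℝ) * ∑ r ∈ Res, periodize d R ζ (x + intVec d r) := by
    have hp : ∀ (r q : Fin d → ℤ),
        periodize d R ζ (x + intVec d (φ (r, q))) = periodize d R ζ (x + intVec d r) := by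
      intro r q
      have heq : x + intVec d (φ (r, q)) = (x + intVec d r) + (R : ℝ) • intVec d (-q) := by
        ext i
        show x i + ((r i - (R : ℤ) * q i : ℤ) : ℝ) = (x i + (r i : ℝ)) + (R : ℝ) * ((-q i : ℤ) : ℝ)
        push_cast; ring
      rw [heq, periodize_shift]
    rw [Finset.sum_product]
    calc ∑ r ∈ Res, ∑ q ∈ QBox, periodize d R ζ (x + intVec d (φ (r, q)))
        = ∑ r ∈ Res, ∑ _q ∈ QBox, periodize d R ζ (x + intVec d r) := by
          exact Finset.sum_congr rfl fun r _ => Finset.sum_congr rfl fun q _ => hp r q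
      _ = ∑ r ∈ Res, (QBox.card : ℝ) * periodize d R ζ (x + intVec d r) := by
          exact Finset.sum_congr rfl fun r _ => by rw [Finset.sum_const, nsmul_eq_mul]
      _ = (QBox.card : ℝ) * ∑ r ∈ Res, periodize d R ζ (x + intVec d r) := by
          rw [Finset.mul_sum]
  -- card of QBox
  have hcardQ : (QBox.card : ℝ) ≤ (5 * (N : ℝ) / (R : ℝ)) ^ d := by
    rw [hQBox, Fintype.card_piFinset]
    have hc1 : ∀ i : Fin d, ((Finset.Icc (-(Q + 1)) (Q + 1)).card : ℝ) = 2 * (Q : ℝ) + 3 := by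
      intro i
      rw [Int.card_Icc]
      have h3 : (0 : ℤ) ≤ Q + 1 + 1 - -(Q + 1) := by omega
      rw [show ((Q + 1 + 1 - -(Q + 1)).toNat : ℝ) = ((Q + 1 + 1 - -(Q + 1) : ℤ) : ℝ) from by
        rw [← Int.cast_natCast, Int.toNat_of_nonneg h3]]
      push_cast; ring
    have hQle : (Q : ℝ) ≤ (N : ℝ) / (R : ℝ) := by
      rw [le_div_iff₀ hRposR]
      have : Q * (R : ℤ) ≤ (N : ℤ) := Int.ediv_mul_le _ (by omega)
      exact_mod_cast this
    have hone : (1 : ℝ) ≤ (N : ℝ) / (R : ℝ) := by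
      rw [le_div_iff₀ hRposR]
      simpa using (by exact_mod_cast hN : (R : ℝ) ≤ (N : ℝ))
    have hb : (2 * (Q : ℝ) + 3) ≤ 5 * (N : ℝ) / (R : ℝ) := by
      have : 5 * (N : ℝ) / (R : ℝ) = 2 * ((N : ℝ) / (R : ℝ)) + 3 * ((N : ℝ) / (R : ℝ)) := by
        ring
      rw [this]
      have hQ0' : (0 : ℝ) ≤ (Q : ℝ) := by exact_mod_cast hQ0
      nlinarith
    calc ((∏ i : Fin d, (Finset.Icc (-(Q + 1)) (Q + 1)).card : ℕ) : ℝ)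
        = ∏ i : Fin d, ((Finset.Icc (-(Q + 1)) (Q + 1)).card : ℝ) := by push_cast; rfl
      _ = ∏ _i : Fin d, (2 * (Q : ℝ) + 3) := Finset.prod_congr rfl fun i _ => hc1 i
      _ = (2 * (Q : ℝ) + 3) ^ d := by
          rw [Finset.prod_const, Finset.card_univ, Fintype.card_fin]
      _ ≤ (5 * (N : ℝ) / (R : ℝ)) ^ d := by
          apply pow_le_pow_left₀ (by positivity) hb
  -- combine
  have hT := sum_res_le hK hζ0 hζle hM' hζsupp R hR x
  have hT0 : 0 ≤ ∑ r ∈ Res, periodize d R ζ (x + intVec d r) :=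
    Finset.sum_nonneg fun r _ => hper0 _
  have hchain : ∑ k ∈ F, Set.indicator {k : Fin d → ℤ | cube d 1 (intVec d k) ⊆ cube d N 0}
        (fun k => periodize d R ζ (x + intVec d k)) k
      ≤ (5 * (N : ℝ) / (R : ℝ)) ^ d * (M' * (K + 1) ^ d) := by
    calc _ ≤ ∑ k ∈ F, periodize d R ζ (x + intVec d k) := hstep2
      _ ≤ ∑ p ∈ Res ×ˢ QBox, periodize d R ζ (x + intVec d (φ p)) := hstep3
      _ = (QBox.card : ℝ) * ∑ r ∈ Res, periodize d R ζ (x + intVec d r) := hstep4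
      _ ≤ (5 * (N : ℝ) / (R : ℝ)) ^ d * (M' * (K + 1) ^ d) := by
          apply mul_le_mul hcardQ hT hT0 (by positivity)
  calc ((N : ℝ) ^ d)⁻¹ * ∑ k ∈ F, Set.indicator
        {k : Fin d → ℤ | cube d 1 (intVec d k) ⊆ cube d N 0}
        (fun k => periodize d R ζ (x + intVec d k)) k
      ≤ ((N : ℝ) ^ d)⁻¹ * ((5 * (N : ℝ) / (R : ℝ)) ^ d * (M' * (K + 1) ^ d)) := by
        apply mul_le_mul_of_nonneg_left hchain (by positivity)
    _ = 5 ^ d * (M' * (K + 1) ^ d) / (R : ℝ) ^ d := by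
        rw [div_pow, mul_pow]
        field_simp

end AvgBumpAux

/-- for a nonnegative bounded `ζ` supported in `Q_K`,
`sup_x ζ̂_R(x) ≤ C R^{-d}` for all `R ∈ ℕ`, with `C` depending only on `‖ζ‖_∞`, `K`, `d`. -/
theorem avgUpper_of_periodized_bump_le
    (d : ℕ) (hd : 1 ≤ d) (K : ℝ) (hK : 0 < K)
    (ζ : EucSp d → ℝ) (hζ0 : ∀ x, 0 ≤ ζ x) (hζb : ∃ M, ∀ x, |ζ x| ≤ M)
    (hζsupp : Function.support ζ ⊆ cube d K 0) :
    ∃ C : ℝ, 0 < C ∧ ∀ R : ℕ, 1 ≤ R → ∀ x : EucSp d,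
      avgUpper d (periodize d R ζ) x ≤ C / (R : ℝ) ^ d := by
  classical
  obtain ⟨M, hM⟩ := hζb
  set M' : ℝ := |M| + 1 with hM'def
  have hM'0 : (0 : ℝ) ≤ M' := by positivity
  have hζle : ∀ y, ζ y ≤ M' := by
    intro y
    have h1 := le_abs_self (ζ y)
    have h2 := hM y
    have h3 := le_abs_self M
    rw [hM'def]; linarith
  refine ⟨5 ^ d * (M' * (K + 1) ^ d), ?_, ?_⟩
  · apply mul_pos (by positivity)
    apply mul_pos (by positivity)
    exact pow_pos (by linarith) d
  intro R hR x
  rw [avgUpper]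
  apply Filter.limsup_le_of_le
  · apply Filter.isCoboundedUnder_le_of_le Filter.atTop (x := 0)
    intro N
    apply mul_nonneg (inv_nonneg.2 (by positivity))
    exact tsum_nonneg fun k =>
      Set.indicator_nonneg (fun k _ => tsum_nonneg fun j => hζ0 _) k
  · filter_upwards [Filter.eventually_ge_atTop R] with N hN
    exact AvgBumpAux.key_bound hK hζ0 hζle hM'0 hζsupp R hR x N hN
end

section
/- Let G : ℝ × ℝ → ℝ be C², 1-periodic in its second variable, with ∂_r G and ∂²_{rr} G bounded, and let a ∈ ℝ be such that c_0 := ∫_0^1 ∂_r G(a, x) dx ≠ 0. Let ζ : ℝ → ℝ be nonnegative, continuous and compactly supported, and for R ∈ ℕ set ζ_R(x) := Σ_{k∈ℤ} ζ(x − Rk). Suppose that (S_R)_{R∈ℕ} is a sequence of reals with |S_R| ≤ C/R for some C > 0, satisfying, for all sufficiently large R ∈ ℕ, ∫_{−R/2}^{R/2} ( G(ζ_R(x) + a + S_R, x) − G(a, x) ) dx = 0. Then lim_{R→∞} R·S_R = −c_0^{−1} ∫_ℝ ( G(ζ(x) + a, x) − G(a, x) ) dx. -/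
open MeasureTheory Filter Topology Set

noncomputable section

/-! Since `ζ` has compact support, for large `R` the periodization `ζ_R` agrees with `ζ` on
`[-R/2, R/2]`, and a first-order Taylor expansion of `G` in its first variable around `ζ + a`
gives, uniformly in `t`,
`∫_{-R/2}^{R/2} (G(ζ + a + t) - G(a)) = I + t (R c₀ + B) + O(R t²)`,
with `I = ∫ (G(ζ + a) - G(a))` and `B = ∫ (∂_r G(ζ + a) - ∂_r G(a))`; periodicity turns the
integral of `∂_r G(a, ·)` over `[-R/2, R/2]` into `R c₀`. For `t = S_R = O(1/R)` the equation
becomes `c₀ R S_R = -I + O(S_R) + O(1/R)`. -/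

theorem abs_sub_sub_mul_le_of_lipschitz_deriv {f f' : ℝ → ℝ} {M : ℝ}
    (hf : ∀ x, HasDerivAt f (f' x) x) (hf' : ∀ u v, |f' u - f' v| ≤ M * |u - v|) (b s : ℝ) :
    |f (b + s) - f b - s * f' b| ≤ M * s ^ 2 := by
  have hM : 0 ≤ M := by simpa using (abs_nonneg _).trans (hf' 1 0)
  have hbound : ∀ u ∈ uIcc b (b + s), ‖f' u - f' b‖ ≤ M * |s| := fun u hu => by
    have hu' : |u - b| ≤ |s| := by simpa using abs_sub_left_of_mem_uIcc hu
    exact (hf' u b).trans (mul_le_mul_of_nonneg_left hu' hM)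
  have := (convex_uIcc b (b + s)).norm_image_sub_le_of_norm_hasDerivWithin_le
    (f := fun u => f u - u * f' b)
    (fun u _ => ((hf u).sub ((hasDerivAt_id u).mul_const (f' b))).hasDerivWithinAt.congr_deriv
      (by simp)) hbound left_mem_uIcc right_mem_uIcc
  calc |f (b + s) - f b - s * f' b|
      = ‖f (b + s) - (b + s) * f' b - (f b - b * f' b)‖ := by
        rw [Real.norm_eq_abs]; ring_nf
    _ ≤ M * |s| * ‖b + s - b‖ := this
    _ = M * s ^ 2 := by
        rw [add_sub_cancel_left, Real.norm_eq_abs, mul_assoc, abs_mul_abs_self, sq]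

theorem HasCompactSupport.exists_support_subset_Icc {f : ℝ → ℝ} (hf : HasCompactSupport f) :
    ∃ K, Function.support f ⊆ Icc (-K) K := by
  obtain ⟨K, hK⟩ := hf.isCompact.isBounded.subset_closedBall 0
  exact ⟨K, by simpa [Real.closedBall_eq_Icc] using (subset_tsupport f).trans hK⟩

theorem abs_deriv_sub_deriv_le {f : ℝ → ℝ} (hf : ContDiff ℝ 2 f) {M : ℝ}
    (hM : ∀ x, |deriv (deriv f) x| ≤ M) (u v : ℝ) :
    |deriv f u - deriv f v| ≤ M * |u - v| :=
  Convex.norm_image_sub_le_of_norm_deriv_le (fun y _ => hf.differentiable_deriv_two y)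
    (fun y _ => hM y) convex_univ (mem_univ v) (mem_univ u)

theorem tsum_comp_sub_mul_int_eq_self {E : Type*} [AddCommMonoid E] [TopologicalSpace E]
    {ζ : ℝ → E} {K R x : ℝ} (hsupp : Function.support ζ ⊆ Icc (-K) K) (hR : 2 * K < R)
    (hx : |x| ≤ R / 2) : ∑' k : ℤ, ζ (x - R * k) = ζ x := by
  rw [tsum_eq_single 0 fun k hk => Function.notMem_support.mp fun hmem => ?_]
  · simp
  have hxk : |x - R * k| ≤ K := abs_le.mpr (hsupp hmem)
  have hk : (1 : ℝ) ≤ |(k : ℝ)| := by exact_mod_cast Int.one_le_abs hk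
  have hR0 : 0 ≤ R := by linarith [abs_nonneg (x - R * k)]
  have : R ≤ |R * k| := by rw [abs_mul, abs_of_nonneg hR0]; nlinarith
  linarith [abs_sub_abs_le_abs_sub (R * k) x, abs_sub_comm (R * k) x]

theorem Function.Periodic.intervalIntegral_add_nat_mul {f : ℝ → ℝ} {T : ℝ}
    (hf : Function.Periodic f T) (hfi : ∀ t₁ t₂, IntervalIntegrable f volume t₁ t₂)
    (n : ℕ) (t : ℝ) : ∫ x in t..t + n * T, f x = n * ∫ x in (0 : ℝ)..T, f x := by
  simpa [hf.intervalIntegral_add_eq t 0] using hf.intervalIntegral_add_zsmul_eq n t hfi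

theorem ContDiff.continuous_uncurry_deriv_fst {G : ℝ → ℝ → ℝ}
    (hG : ContDiff ℝ 1 (Function.uncurry G)) :
    Continuous (Function.uncurry fun r x => deriv (fun s => G s x) r) := by
  have hpartial : ∀ p : ℝ × ℝ,
      deriv (fun s => G s p.2) p.1 = fderiv ℝ (Function.uncurry G) p (1, 0) := fun p =>
    ((hG.differentiable one_ne_zero p).hasFDerivAt.comp_hasDerivAt (l := Function.uncurry G)
      p.1 ((hasDerivAt_id p.1).prodMk (hasDerivAt_const p.1 p.2))).deriv
  simpa only [Function.uncurry_def, hpartial] using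
    (hG.continuous_fderiv one_ne_zero).clm_apply continuous_const

section FirstOrderExpansion

variable {G G' : ℝ → ℝ → ℝ} {φ : ℝ → ℝ}

theorem intervalIntegral_sub_first_order_eq (hG : Continuous (Function.uncurry G))
    (hG' : Continuous (Function.uncurry G')) (hφ : Continuous φ) (a t α β : ℝ) :
    (∫ x in α..β, (G (φ x + t) x - G a x))
      - ((∫ x in α..β, (G (φ x) x - G a x))
        + t * ((∫ x in α..β, G' a x) + ∫ x in α..β, (G' (φ x) x - G' a x)))
      = ∫ x in α..β, (G (φ x + t) x - G (φ x) x - t * G' (φ x) x) := by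
  have i₁ : IntervalIntegrable (fun x => G (φ x + t) x - G a x) volume α β :=
    ((hG.comp₂ (hφ.add continuous_const) continuous_id).sub
      (hG.comp₂ continuous_const continuous_id)).intervalIntegrable _ _
  have i₂ : IntervalIntegrable (fun x => G (φ x) x - G a x) volume α β :=
    ((hG.comp₂ hφ continuous_id).sub
      (hG.comp₂ continuous_const continuous_id)).intervalIntegrable _ _
  have i₃ : IntervalIntegrable (fun x => G' a x) volume α β :=
    (hG'.comp₂ continuous_const continuous_id).intervalIntegrable _ _
  have i₄ : IntervalIntegrable (fun x => G' (φ x) x - G' a x) volume α β :=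
    ((hG'.comp₂ hφ continuous_id).sub
      (hG'.comp₂ continuous_const continuous_id)).intervalIntegrable _ _
  rw [← intervalIntegral.integral_add i₃ i₄, ← intervalIntegral.integral_const_mul,
    ← intervalIntegral.integral_add i₂ ((i₃.add i₄).const_mul t),
    ← intervalIntegral.integral_sub i₁ (i₂.add ((i₃.add i₄).const_mul t))]
  congr 1 with x
  ring

theorem abs_intervalIntegral_sub_first_order_le {ζ : ℝ → ℝ} {M K : ℝ}
    (hG : Continuous (Function.uncurry G)) (hG' : Continuous (Function.uncurry G'))
    (hderiv : ∀ r x, HasDerivAt (fun s => G s x) (G' r x) r)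
    (hlip : ∀ x u v, |G' u x - G' v x| ≤ M * |u - v|) {a : ℝ}
    (hper : Function.Periodic (G' a) 1) (hζ : Continuous ζ)
    (hsupp : Function.support ζ ⊆ Icc (-K) K) {n : ℕ} (hn : K < n / 2) (t : ℝ) :
    |(∫ x in (-(n : ℝ) / 2)..(n / 2), (G (ζ x + a + t) x - G a x))
      - ((∫ x, (G (ζ x + a) x - G a x))
        + t * (n * (∫ x in (0 : ℝ)..1, G' a x) + ∫ x, (G' (ζ x + a) x - G' a x)))|
      ≤ M * t ^ 2 * n := by
  have hIoc : Icc (-K) K ⊆ Ioc (-(n : ℝ) / 2) (n / 2) :=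
    Icc_subset_Ioc (by linarith) (by linarith)
  have hsupp' : ∀ {H : ℝ → ℝ → ℝ},
      Function.support (fun x => H (ζ x + a) x - H a x) ⊆ Ioc (-(n : ℝ) / 2) (n / 2) :=
    fun {H} => (Function.support_subset_iff'.mpr fun x hx => by
      simp [Function.notMem_support.mp fun h => hx (hsupp h)]).trans hIoc
  have hperiod : ∫ x in (-(n : ℝ) / 2)..(n / 2), G' a x = n * ∫ x in (0 : ℝ)..1, G' a x := by
    have := hper.intervalIntegral_add_nat_mul
      (fun _ _ => (hG'.comp₂ continuous_const continuous_id).intervalIntegrable _ _)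
      n (-(n : ℝ) / 2)
    rwa [show -(n : ℝ) / 2 + n * 1 = n / 2 by ring] at this
  rw [← intervalIntegral.integral_eq_integral_of_support_subset hsupp',
    ← intervalIntegral.integral_eq_integral_of_support_subset hsupp', ← hperiod,
    intervalIntegral_sub_first_order_eq (φ := fun x => ζ x + a) hG hG'
      (hζ.add continuous_const), ← Real.norm_eq_abs]
  calc _ ≤ M * t ^ 2 * |(n : ℝ) / 2 - -(n : ℝ) / 2| :=
        intervalIntegral.norm_integral_le_of_norm_le_const fun x _ =>
          abs_sub_sub_mul_le_of_lipschitz_deriv (hderiv · x) (hlip x) (ζ x + a) t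
    _ = M * t ^ 2 * n := by rw [show (n : ℝ) / 2 - -(n : ℝ) / 2 = n by ring, Nat.abs_cast]

end FirstOrderExpansion

theorem tendsto_mul_of_abs_first_order_le {S : ℕ → ℝ} {c₀ B I M C : ℝ} (hc₀ : c₀ ≠ 0)
    (hS : ∀ n : ℕ, 1 ≤ n → |S n| ≤ C / n)
    (h : ∀ᶠ n : ℕ in atTop, |I + S n * (n * c₀ + B)| ≤ M * S n ^ 2 * n) :
    Tendsto (fun n : ℕ => (n : ℝ) * S n) atTop (𝓝 (-c₀⁻¹ * I)) := by
  have hS0 : Tendsto S atTop (𝓝 0) :=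
    squeeze_zero_norm' ((eventually_ge_atTop 1).mono hS) (tendsto_const_div_atTop_nhds_zero_nat C)
  have hE0 : Tendsto (fun n : ℕ => I + S n * (n * c₀ + B)) atTop (𝓝 0) := by
    refine squeeze_zero_norm' ?_ (tendsto_const_div_atTop_nhds_zero_nat (|M| * C ^ 2))
    filter_upwards [h, eventually_ge_atTop 1] with n hn hn1
    have hn0 : (0 : ℝ) < n := by exact_mod_cast hn1
    have hsq : S n ^ 2 ≤ (C / n) ^ 2 := by
      rw [← sq_abs]; exact pow_le_pow_left₀ (abs_nonneg _) (hS n hn1) 2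
    calc ‖I + S n * (n * c₀ + B)‖ ≤ M * S n ^ 2 * n := hn
      _ ≤ |M| * (C / n) ^ 2 * n := by gcongr; exact le_abs_self M
      _ = |M| * C ^ 2 / n := by field_simp
  have hlim := ((hE0.sub (tendsto_const_nhds (x := I))).sub (hS0.const_mul B)).const_mul c₀⁻¹
  convert hlim using 1
  · ext n; field_simp; ring
  · simp

theorem one_dim_expansion_core_periodic_general
    (G : ℝ → ℝ → ℝ) (hG : ContDiff ℝ 2 fun q : ℝ × ℝ => G q.1 q.2)
    (hGper : ∀ r x : ℝ, G r (x + 1) = G r x)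
    (hD2 : ∃ M : ℝ, ∀ r x : ℝ, |deriv (deriv fun s => G s x) r| ≤ M)
    (a c₀ : ℝ) (hc₀ : c₀ = ∫ x in (0 : ℝ)..1, deriv (fun s => G s x) a) (hc₀ne : c₀ ≠ 0)
    (ζ : ℝ → ℝ) (hζc : Continuous ζ) (hζs : HasCompactSupport ζ)
    (S : ℕ → ℝ) (C : ℝ) (hS : ∀ R : ℕ, 1 ≤ R → |S R| ≤ C / R)
    (heq : ∀ᶠ R : ℕ in atTop,
      ∫ x in (-(R : ℝ) / 2)..((R : ℝ) / 2),
        (G ((∑' k : ℤ, ζ (x - R * k)) + a + S R) x - G a x) = 0) :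
    Tendsto (fun R : ℕ => (R : ℝ) * S R) atTop
      (𝓝 (-c₀⁻¹ * ∫ x : ℝ, (G (ζ x + a) x - G a x))) := by
  obtain ⟨M, hM⟩ := hD2
  obtain ⟨K, hsupp⟩ := hζs.exists_support_subset_Icc
  have hslice : ∀ x, ContDiff ℝ 2 fun s => G s x := fun x =>
    hG.comp (contDiff_id.prodMk contDiff_const)
  have hderiv : ∀ r x, HasDerivAt (fun s => G s x) (deriv (fun s => G s x) r) r := fun r x =>
    ((hslice x).differentiable two_ne_zero r).hasDerivAt
  have hper : Function.Periodic (fun x => deriv (fun s => G s x) a) 1 := fun x => by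
    simp only [hGper]
  subst hc₀
  refine tendsto_mul_of_abs_first_order_le (M := M)
    (B := ∫ x, (deriv (fun s => G s x) (ζ x + a) - deriv (fun s => G s x) a)) hc₀ne hS ?_
  filter_upwards [heq, eventually_gt_atTop ⌈2 * K⌉₊] with n hn hKn
  replace hKn : 2 * K < n := Nat.lt_of_ceil_lt hKn
  have hhalf : ∀ x ∈ uIcc (-(n : ℝ) / 2) (n / 2), |x| ≤ n / 2 := fun x hx => by
    rw [uIcc_of_le (by linarith)] at hx
    exact abs_le.mpr ⟨by linarith [hx.1], hx.2⟩
  rw [intervalIntegral.integral_congr fun x hx => by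
    rw [tsum_comp_sub_mul_int_eq_self hsupp hKn (hhalf x hx)]] at hn
  have hexp := abs_intervalIntegral_sub_first_order_le (G := G) (n := n) hG.continuous
    (hG.of_le one_le_two).continuous_uncurry_deriv_fst hderiv
    (fun x => abs_deriv_sub_deriv_le (hslice x) (hM · x)) hper hζc hsupp (by linarith) (S n)
  rwa [hn, zero_sub, abs_neg] at hexp

/-- the real-analysis core of the one-dimensional periodic asymptotic
expansion: if `|S_R| ≤ C/R` and
`∫_{-R/2}^{R/2} (G(ζ_R(x) + a + S_R, x) - G(a, x)) dx = 0` for all large `R`, then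
`R S_R → -c₀⁻¹ ∫_ℝ (G(ζ(x) + a, x) - G(a, x)) dx`. -/
theorem one_dim_expansion_core_periodic
    (G : ℝ → ℝ → ℝ) (hG : ContDiff ℝ 2 fun q : ℝ × ℝ => G q.1 q.2)
    (hGper : ∀ r x : ℝ, G r (x + 1) = G r x)
    (hD1 : ∃ M : ℝ, ∀ r x : ℝ, |deriv (fun s => G s x) r| ≤ M)
    (hD2 : ∃ M : ℝ, ∀ r x : ℝ, |deriv (deriv fun s => G s x) r| ≤ M)
    (a c₀ : ℝ) (hc₀ : c₀ = ∫ x in (0 : ℝ)..1, deriv (fun s => G s x) a) (hc₀ne : c₀ ≠ 0)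
    (ζ : ℝ → ℝ) (hζ0 : ∀ x, 0 ≤ ζ x) (hζc : Continuous ζ) (hζs : HasCompactSupport ζ)
    (S : ℕ → ℝ) (C : ℝ) (hC : 0 < C) (hS : ∀ R : ℕ, 1 ≤ R → |S R| ≤ C / R)
    (heq : ∀ᶠ R : ℕ in atTop,
      ∫ x in (-(R : ℝ) / 2)..((R : ℝ) / 2),
        (G ((∑' k : ℤ, ζ (x - R * k)) + a + S R) x - G a x) = 0) :
    Tendsto (fun R : ℕ => (R : ℝ) * S R) atTop
      (𝓝 (-c₀⁻¹ * ∫ x : ℝ, (G (ζ x + a) x - G a x))) :=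
  one_dim_expansion_core_periodic_general G hG hGper hD2 a c₀ hc₀ hc₀ne ζ hζc hζs S C hS heq

end
end

section
/- Let G : ℝ × ℝ → ℝ be C², 1-periodic in its second variable, with ∂_r G and ∂²_{rr} G bounded, and let a ∈ ℝ be such that c_0 := ∫_0^1 ∂_r G(a, x) dx ≠ 0. Let ζ : ℝ → ℝ be nonnegative, continuous and supported in (0,1). Suppose that for each η ∈ (0,1), S_η ∈ ℝ satisfies |S_η| ≤ Cη for some C > 0 and the identity (1 − η) ∫_0^1 G(a + S_η, x) dx + η ∫_0^1 G(ζ(x) + a + S_η, x) dx = ∫_0^1 G(a, x) dx. Then lim_{η→0^+} S_η/η = −c_0^{−1} ∫_0^1 ( G(ζ(x) + a, x) − G(a, x) ) dx. -/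
/-!
Put `Φ s = ∫₀¹ G (a + s) x dx` and `Ψ s = ∫₀¹ G (ζ x + a + s) x dx`. Differentiating under the
integral sign gives `Φ'(0) = c₀`, so `Φ (S η) - Φ 0 = c₀ S η + o(η)` because `S η = O(η)`. On the
other hand the identity makes `(Φ (S η) - Φ 0) / η` equal to `Φ (S η) - Ψ (S η)` up to `O(η)`,
which tends to `Φ 0 - Ψ 0` by continuity. Dividing by `c₀` gives the limit of `S η / η`.
-/

open MeasureTheory Filter Topology Set

section PartialDerivative

variable {E : Type*} [NormedAddCommGroup E] [NormedSpace ℝ E] {F : ℝ → ℝ → E}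

theorem hasDerivAt_left_of_differentiable_uncurry (hF : Differentiable ℝ (Function.uncurry F))
    (r x : ℝ) : HasDerivAt (fun r => F r x) (fderiv ℝ (Function.uncurry F) (r, x) (1, 0)) r :=
  (hF (r, x)).hasFDerivAt.comp_hasDerivAt (f := fun r => (r, x)) r
    ((hasDerivAt_id r).prodMk (hasDerivAt_const r x))

theorem hasDerivAt_intervalIntegral_of_contDiff_uncurry (hF : ContDiff ℝ 1 (Function.uncurry F))
    (a b r₀ : ℝ) :
    HasDerivAt (fun r => ∫ x in a..b, F r x) (∫ x in a..b, deriv (fun r => F r x) r₀) r₀ := by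
  set F' : ℝ → ℝ → E := fun r x => fderiv ℝ (Function.uncurry F) (r, x) (1, 0)
  have hdiff := hasDerivAt_left_of_differentiable_uncurry (hF.differentiable one_ne_zero)
  have hF'c : Continuous (Function.uncurry F') :=
    (hF.continuous_fderiv one_ne_zero).clm_apply continuous_const
  obtain ⟨M, hM⟩ := ((isCompact_closedBall r₀ 1).prod
    (isCompact_uIcc (a := a) (b := b))).exists_bound_of_continuousOn hF'c.continuousOn
  have hball : ∀ r ∈ Metric.ball r₀ 1, ∀ x ∈ uIoc a b, ‖F' r x‖ ≤ M := fun r hr x hx =>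
    hM (r, x) ⟨Metric.ball_subset_closedBall hr, uIoc_subset_uIcc hx⟩
  have hFc : Continuous (Function.uncurry F) := hF.continuous
  have key := intervalIntegral.hasDerivAt_integral_of_dominated_loc_of_deriv_le (μ := volume)
    (F := F) (F' := F') (bound := fun _ => M) (Metric.ball_mem_nhds r₀ one_pos)
    (Eventually.of_forall fun r => (hFc.comp (Continuous.prodMk_right r)).aestronglyMeasurable)
    ((hFc.comp (Continuous.prodMk_right r₀)).intervalIntegrable _ _)
    (hF'c.comp (Continuous.prodMk_right r₀)).aestronglyMeasurable
    (Eventually.of_forall fun x hx r hr => hball r hr x hx) intervalIntegrable_const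
    (Eventually.of_forall fun x _ r _ => hdiff r x)
  simpa only [(hdiff _ _).deriv] using key.2

end PartialDerivative

theorem tendsto_div_of_hasDerivAt_of_tendsto_div {Φ S : ℝ → ℝ} {c L : ℝ} {l : Filter ℝ}
    (hl : l ≤ 𝓝[≠] 0) (hΦ : HasDerivAt Φ c 0) (hc : c ≠ 0) (hS : S =O[l] id)
    (hΦS : Tendsto (fun η => (Φ (S η) - Φ 0) / η) l (𝓝 L)) :
    Tendsto (fun η => S η / η) l (𝓝 (c⁻¹ * L)) := by
  have hS0 : Tendsto S l (𝓝 0) := hS.trans_tendsto (hl.trans nhdsWithin_le_nhds)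
  have hrem : Tendsto (fun η => (Φ (S η) - Φ 0 - S η * c) / η) l (𝓝 0) := by
    have := ((hasDerivAt_iff_isLittleO_nhds_zero.mp hΦ).comp_tendsto hS0).trans_isBigO hS
    simpa only [zero_add, smul_eq_mul, Function.comp_apply, id] using this.tendsto_div_nhds_zero
  rw [← sub_zero L]
  refine ((hΦS.sub hrem).const_mul c⁻¹).congr' ?_
  filter_upwards [hl self_mem_nhdsWithin] with η (hη : η ≠ 0)
  field_simp
  ring

theorem tendsto_div_of_one_sub_mul_add_eq {Φ Ψ S : ℝ → ℝ} {c : ℝ} {l : Filter ℝ}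
    (hl : l ≤ 𝓝[≠] 0) (hΦ : HasDerivAt Φ c 0) (hc : c ≠ 0) (hΨ : ContinuousAt Ψ 0)
    (hS : S =O[l] id) (heq : ∀ᶠ η in l, (1 - η) * (Φ (S η) + η * Ψ (S η)) = Φ 0) :
    Tendsto (fun η => S η / η) l (𝓝 (-c⁻¹ * (Ψ 0 - Φ 0))) := by
  have hl0 : Tendsto id l (𝓝 0) := hl.trans nhdsWithin_le_nhds
  have hS0 : Tendsto S l (𝓝 0) := hS.trans_tendsto hl0
  have hlim : Tendsto (fun η => Φ (S η) - (1 - η) * Ψ (S η)) l (𝓝 (Φ 0 - Ψ 0)) := by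
    simpa only [Function.comp_apply, id, sub_zero, one_mul] using
      (hΦ.continuousAt.tendsto.comp hS0).sub (((tendsto_const_nhds (x := (1 : ℝ))).sub hl0).mul (hΨ.tendsto.comp hS0))
  have hΦS : Tendsto (fun η => (Φ (S η) - Φ 0) / η) l (𝓝 (Φ 0 - Ψ 0)) := by
    refine hlim.congr' ?_
    filter_upwards [heq, hl self_mem_nhdsWithin] with η hη (hη0 : η ≠ 0)
    field_simp
    linear_combination -hη
  rw [neg_mul, ← mul_neg, neg_sub]
  exact tendsto_div_of_hasDerivAt_of_tendsto_div hl hΦ hc hS hΦS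

theorem one_dim_expansion_core_random_general
    (G : ℝ → ℝ → ℝ) (hG : ContDiff ℝ 2 fun q : ℝ × ℝ => G q.1 q.2)
    (a c₀ : ℝ) (hc₀ : c₀ = ∫ x in (0 : ℝ)..1, deriv (fun s => G s x) a) (hc₀ne : c₀ ≠ 0)
    (ζ : ℝ → ℝ) (hζc : Continuous ζ)
    (S : ℝ → ℝ) (C : ℝ) (hS : ∀ η ∈ Set.Ioo (0 : ℝ) 1, |S η| ≤ C * η)
    (heq : ∀ η ∈ Set.Ioo (0 : ℝ) 1,
      (1 - η) * ∫ x in (0 : ℝ)..1, G (a + S η) x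
        + η * ∫ x in (0 : ℝ)..1, G (ζ x + a + S η) x
        = ∫ x in (0 : ℝ)..1, G a x) :
    Tendsto (fun η => S η / η) (𝓝[>] (0 : ℝ))
      (𝓝 (-c₀⁻¹ * ∫ x in (0 : ℝ)..1, (G (ζ x + a) x - G a x))) := by
  set Φ : ℝ → ℝ := fun s => ∫ x in (0 : ℝ)..1, G (a + s) x
  set Ψ : ℝ → ℝ := fun s => ∫ x in (0 : ℝ)..1, G (ζ x + a + s) x
  have hGc : Continuous fun q : ℝ × ℝ => G q.1 q.2 := hG.continuous
  have hGr : ∀ r, Continuous (G r) := fun r => hGc.comp (Continuous.prodMk_right r)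
  have hGζ : Continuous fun p : ℝ × ℝ => G (ζ p.2 + a + p.1) p.2 :=
    hGc.comp (f := fun p : ℝ × ℝ => (ζ p.2 + a + p.1, p.2)) (by fun_prop)
  have hΦ : HasDerivAt Φ c₀ 0 := by
    have h := hasDerivAt_intervalIntegral_of_contDiff_uncurry (hG.of_le one_le_two) 0 1 a
    rw [← hc₀, ← add_zero a] at h
    exact h.comp_const_add a 0
  have hΨ : ContinuousAt Ψ 0 :=
    (intervalIntegral.continuous_parametric_intervalIntegral_of_continuous'
      (f := fun s x => G (ζ x + a + s) x) hGζ 0 1).continuousAt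
  have hIoo : Ioo (0 : ℝ) 1 ∈ 𝓝[>] (0 : ℝ) := Ioo_mem_nhdsGT one_pos
  have hSO : S =O[𝓝[>] (0 : ℝ)] id := .of_bound C <| eventually_of_mem hIoo fun η hη => by
    simpa only [Real.norm_eq_abs, id, abs_of_pos hη.1] using hS η hη
  -- The body of the first `∫` in `heq` extends to the `=`, so `heq` says
  -- `(1 - η) * (Φ (S η) + η * Ψ (S η)) = Φ 0`.
  have heq' : ∀ᶠ η in 𝓝[>] (0 : ℝ), (1 - η) * (Φ (S η) + η * Ψ (S η)) = Φ 0 := by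
    filter_upwards [hIoo] with η hη
    have h := heq η hη
    rw [intervalIntegral.integral_add ((hGr _).intervalIntegrable _ _) intervalIntegrable_const,
      intervalIntegral.integral_const, sub_zero, one_smul] at h
    simpa only [Φ, add_zero] using h
  have hI : ∫ x in (0 : ℝ)..1, (G (ζ x + a) x - G a x) = Ψ 0 - Φ 0 := by
    simp only [Ψ, Φ, add_zero]
    exact intervalIntegral.integral_sub
      ((hGc.comp (f := fun x => (ζ x + a, x)) (by fun_prop)).intervalIntegrable _ _)
      ((hGr a).intervalIntegrable _ _)
  rw [hI]
  exact tendsto_div_of_one_sub_mul_add_eq (nhdsGT_le_nhdsNE 0) hΦ hc₀ne hΨ hSO heq'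

/-- the real-analysis core of the one-dimensional random (Bernoulli)
asymptotic expansion: if `|S_η| ≤ C η` and
`(1-η) ∫_0^1 G(a + S_η, x) dx + η ∫_0^1 G(ζ(x) + a + S_η, x) dx = ∫_0^1 G(a, x) dx`
for all `η ∈ (0,1)`, then `S_η/η → -c₀⁻¹ ∫_0^1 (G(ζ(x) + a, x) - G(a, x)) dx`. -/
theorem one_dim_expansion_core_random
    (G : ℝ → ℝ → ℝ) (hG : ContDiff ℝ 2 fun q : ℝ × ℝ => G q.1 q.2)
    (hGper : ∀ r x : ℝ, G r (x + 1) = G r x)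
    (hD1 : ∃ M : ℝ, ∀ r x : ℝ, |deriv (fun s => G s x) r| ≤ M)
    (hD2 : ∃ M : ℝ, ∀ r x : ℝ, |deriv (deriv fun s => G s x) r| ≤ M)
    (a c₀ : ℝ) (hc₀ : c₀ = ∫ x in (0 : ℝ)..1, deriv (fun s => G s x) a) (hc₀ne : c₀ ≠ 0)
    (ζ : ℝ → ℝ) (hζ0 : ∀ x, 0 ≤ ζ x) (hζc : Continuous ζ)
    (hζs : Function.support ζ ⊆ Set.Ioo (0 : ℝ) 1)
    (S : ℝ → ℝ) (C : ℝ) (hC : 0 < C) (hS : ∀ η ∈ Set.Ioo (0 : ℝ) 1, |S η| ≤ C * η)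
    (heq : ∀ η ∈ Set.Ioo (0 : ℝ) 1,
      (1 - η) * ∫ x in (0 : ℝ)..1, G (a + S η) x
        + η * ∫ x in (0 : ℝ)..1, G (ζ x + a + S η) x
        = ∫ x in (0 : ℝ)..1, G a x) :
    Tendsto (fun η => S η / η) (𝓝[>] (0 : ℝ))
      (𝓝 (-c₀⁻¹ * ∫ x in (0 : ℝ)..1, (G (ζ x + a) x - G a x))) :=
  one_dim_expansion_core_random_general G hG a c₀ hc₀ hc₀ne ζ hζc S C hS heq
end
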